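/- arXiv:2103.03785 — 4 statements merged into one kernel-verified Lean document; each statement's English description precedes it below -/
import Mathlib

section
/- Let G be a nilpotent group of class at most 5. Then for all x, y in G and every positive integer n, [xⁿ, y] = [x,y]ⁿ · [x,y,x]^(n choose 2) · [x,y,x,x]^(n choose 3) · [x,y,x,x,x]^(n choose 4) · [x,y,x,[x,y]]^σ(n), where σ(n) = n(n-1)(2n-1)/6. -/
/-!
Write `c₁ = [x,y]`, `cᵢ₊₁ = [cᵢ,x]` and `d = [c₂,c₁]`. Induct on `n` using
`[x^(n+1), y] = c₁ · [c₁, x^n] · [x^n, y]`, where `[c₁, x^n] = c₂^n c₃^C(n,2) c₄^C(n,3)` by the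
same induction one level deeper. The three subgroups lemma gives `[γᵢ, γⱼ] ≤ γᵢ₊ⱼ₊₁` (with
`γ₀ = G`), so in class 5 the elements `c₄` and `d` are central and `c₃` commutes with `c₁, c₂`.
Products of words `c₁^p c₂^q c₃^r c₄^s d^t` are then again such words, the only non-trivial
exchange being `c₂^q c₁^p = c₁^p c₂^q d^(qp)`. Step `m` of the induction moves `c₁^m` past `c₂^m`,
so the exponent of `d` is `∑_{m<n} m² = σ(n)`.
-/

/-- The commutator `[a,b] = a⁻¹ b⁻¹ a b`. -/
def cmt {G : Type*} [Group G] (a b : G) : G := a⁻¹ * b⁻¹ * a * b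

theorem Nat.choose_succ_succ_two (n : ℕ) : (n + 1).choose 2 = n.choose 2 + n := by
  rw [Nat.choose_succ_succ, Nat.choose_one_right, add_comm]

theorem Nat.choose_succ_succ_three (n : ℕ) : (n + 1).choose 3 = n.choose 3 + n.choose 2 := by
  rw [Nat.choose_succ_succ, add_comm]

theorem sq_pyramidal_succ (n : ℕ) :
    (n + 1) * (n + 1 - 1) * (2 * (n + 1) - 1) / 6 = n * (n - 1) * (2 * n - 1) / 6 + n * n := by
  rw [← Nat.add_mul_div_left _ _ (by norm_num : 0 < 6)]
  congr 1
  rcases n with _ | n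
  · rfl
  · simp only [Nat.add_sub_cancel, show 2 * (n + 1 + 1) - 1 = 2 * n + 3 by omega,
      show 2 * (n + 1) - 1 = 2 * n + 1 by omega]
    ring

section

open scoped commutatorElement

variable {G : Type*} [Group G]

theorem Subgroup.commutator_commutator_le_of_rotate {H₁ H₂ H₃ N : Subgroup G} [N.Normal]
    (h₁ : ⁅⁅H₂, H₃⁆, H₁⁆ ≤ N) (h₂ : ⁅⁅H₃, H₁⁆, H₂⁆ ≤ N) : ⁅⁅H₁, H₂⁆, H₃⁆ ≤ N := by
  simp_rw [← QuotientGroup.ker_mk' N, ← Subgroup.map_eq_bot_iff, Subgroup.map_commutator] at *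
  exact Subgroup.commutator_commutator_eq_bot_of_rotate h₁ h₂

theorem Subgroup.commutator_lowerCentralSeries_le (i j : ℕ) :
    ⁅(⊤ : Subgroup G).lowerCentralSeries i, (⊤ : Subgroup G).lowerCentralSeries j⁆ ≤
      (⊤ : Subgroup G).lowerCentralSeries (i + j + 1) := by
  induction j generalizing i with
  | zero => rfl
  | succ j ih =>
    rw [lowerCentralSeries_succ, commutator_comm]
    apply commutator_commutator_le_of_rotate
    · rw [commutator_comm ⊤, ← lowerCentralSeries_succ]
      exact (ih (i + 1)).trans_eq (by congr 1; omega)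
    · exact (commutator_mono (ih i) le_rfl).trans_eq (by rw [← lowerCentralSeries_succ]; rfl)

theorem cmt_mem_lowerCentralSeries {a b : G} {i j : ℕ}
    (ha : a ∈ (⊤ : Subgroup G).lowerCentralSeries i)
    (hb : b ∈ (⊤ : Subgroup G).lowerCentralSeries j) :
    cmt a b ∈ (⊤ : Subgroup G).lowerCentralSeries (i + j + 1) := by
  have : cmt a b = ⁅a⁻¹, b⁻¹⁆ := by simp [cmt, commutatorElement_def, mul_assoc]
  exact this ▸ Subgroup.commutator_lowerCentralSeries_le i j
    (Subgroup.commutator_mem_commutator (inv_mem ha) (inv_mem hb))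

theorem commute_of_mem_lowerCentralSeries {n i j : ℕ}
    (hG : (⊤ : Subgroup G).lowerCentralSeries n = ⊥) (hij : n ≤ i + j + 1) {a b : G}
    (ha : a ∈ (⊤ : Subgroup G).lowerCentralSeries i)
    (hb : b ∈ (⊤ : Subgroup G).lowerCentralSeries j) : Commute a b := by
  rw [← commutatorElement_eq_one_iff_commute, ← Subgroup.mem_bot, ← hG]
  exact Subgroup.lowerCentralSeries_antitone _ hij
    (Subgroup.commutator_lowerCentralSeries_le i j (Subgroup.commutator_mem_commutator ha hb))

theorem cmt_mul_left (a b c : G) : cmt (a * b) c = cmt a c * cmt (cmt a c) b * cmt b c := by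
  unfold cmt; group

theorem cmt_mul_right (a b c : G) : cmt a (b * c) = cmt a c * cmt a b * cmt (cmt a b) c := by
  unfold cmt; group

theorem Commute.cmt_eq_one {a b : G} (h : Commute a b) : cmt a b = 1 := by
  simp [cmt, mul_assoc, h.eq]

section PowRight

variable {a x : G}

theorem cmt_pow_right_eq_pow (h : Commute (cmt a x) x) (n : ℕ) :
    cmt a (x ^ n) = cmt a x ^ n := by
  induction n with
  | zero => simp [cmt]
  | succ n ih =>
    rw [pow_succ', cmt_mul_right, ih, (h.pow_right n).cmt_eq_one, mul_one, pow_succ]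

theorem cmt_pow_right_eq_pow_mul_pow (h₁ : Commute (cmt (cmt a x) x) x)
    (h₂ : Commute (cmt (cmt a x) x) (cmt a x)) (n : ℕ) :
    cmt a (x ^ n) = cmt a x ^ n * cmt (cmt a x) x ^ n.choose 2 := by
  induction n with
  | zero => simp [cmt]
  | succ n ih =>
    rw [pow_succ', cmt_mul_right, ih, cmt_pow_right_eq_pow h₁, Nat.choose_succ_succ_two, pow_succ,
      pow_add]
    simp only [mul_assoc]
    rw [(h₂.pow_left _).left_comm]

theorem cmt_pow_right_eq_pow_mul_pow_mul_pow (h₁ : Commute (cmt (cmt (cmt a x) x) x) x)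
    (h₂ : Commute (cmt (cmt (cmt a x) x) x) (cmt (cmt a x) x))
    (h₃ : Commute (cmt (cmt (cmt a x) x) x) (cmt a x))
    (h₄ : Commute (cmt (cmt a x) x) (cmt a x)) (n : ℕ) :
    cmt a (x ^ n) =
      cmt a x ^ n * cmt (cmt a x) x ^ n.choose 2 * cmt (cmt (cmt a x) x) x ^ n.choose 3 := by
  induction n with
  | zero => simp [cmt]
  | succ n ih =>
    rw [pow_succ', cmt_mul_right, ih, cmt_pow_right_eq_pow_mul_pow h₁ h₂,
      Nat.choose_succ_succ_two, Nat.choose_succ_succ_three, pow_succ, pow_add, pow_add]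
    simp only [mul_assoc]
    rw [(h₃.pow_left _).left_comm, (h₄.pow_left _).left_comm, (h₂.pow_pow _ _).left_comm]

end PowRight

section Collection

variable {a b c e d : G}

theorem pow_mul_pow_eq_of_mul_eq (hba : b * a = a * b * d) (hda : Commute d a)
    (hdb : Commute d b) (p q : ℕ) : b ^ q * a ^ p = a ^ p * b ^ q * d ^ (q * p) := by
  have h₁ (q : ℕ) : b ^ q * a = a * b ^ q * d ^ q := by
    induction q with
    | zero => simp
    | succ q ih =>
      rw [pow_succ', mul_assoc, ih, ← mul_assoc, ← mul_assoc, hba, mul_assoc _ d,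
        (hdb.pow_right q).eq, pow_succ]
      group
  induction p with
  | zero => simp
  | succ p ih =>
    rw [pow_succ, ← mul_assoc, ih, mul_assoc, (hda.pow_left _).eq, ← mul_assoc,
      mul_assoc (a ^ p), h₁, mul_add, pow_add]
    group

theorem collect_mul_collect (hba : b * a = a * b * d) (hca : Commute c a) (hcb : Commute c b)
    (he : ∀ g, Commute e g) (hd : ∀ g, Commute d g) (p q r s t p' q' r' s' t' : ℕ) :
    a ^ p * b ^ q * c ^ r * e ^ s * d ^ t * (a ^ p' * b ^ q' * c ^ r' * e ^ s' * d ^ t') =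
      a ^ (p + p') * b ^ (q + q') * c ^ (r + r') * e ^ (s + s') * d ^ (t + t' + q * p') := by
  have he' (n : ℕ) (g : G) : Commute (e ^ n) g := (he g).pow_left n
  have hd' (n : ℕ) (g : G) : Commute (d ^ n) g := (hd g).pow_left n
  calc _ = a ^ p * (b ^ q * a ^ p') * b ^ q' * (c ^ r * c ^ r') * (e ^ s * e ^ s') *
        (d ^ t * d ^ t') := by
        simp only [mul_assoc]
        rw [(hd' t _).left_comm, (hd' t _).left_comm, (hd' t _).left_comm, (hd' t _).left_comm,
          (he' s _).left_comm, (he' s _).left_comm, (he' s _).left_comm, (he' s _).left_comm,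
          (hca.pow_pow r p').left_comm, (hcb.pow_pow r q').left_comm]
    _ = _ := by
      rw [pow_mul_pow_eq_of_mul_eq hba (hd a) (hd b)]
      simp only [mul_assoc, pow_add]
      rw [(hd' (q * p') _).left_comm, (hd' (q * p') _).left_comm, (hd' (q * p') _).left_comm,
        (hd' (q * p') _).left_comm, (hd' (q * p') _).left_comm, (hd' (q * p') _).left_comm,
        (hd' (q * p') _).eq]

end Collection

theorem cmt_pow_left_eq_of_commute {x y : G}
    (hc₄ : ∀ g, Commute (cmt (cmt (cmt (cmt x y) x) x) x) g)
    (hd : ∀ g, Commute (cmt (cmt (cmt x y) x) (cmt x y)) g)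
    (hc₃₁ : Commute (cmt (cmt (cmt x y) x) x) (cmt x y))
    (hc₃₂ : Commute (cmt (cmt (cmt x y) x) x) (cmt (cmt x y) x)) (n : ℕ) :
    cmt (x ^ n) y =
      cmt x y ^ n * cmt (cmt x y) x ^ n.choose 2 * cmt (cmt (cmt x y) x) x ^ n.choose 3 *
        cmt (cmt (cmt (cmt x y) x) x) x ^ n.choose 4 *
        cmt (cmt (cmt x y) x) (cmt x y) ^ (n * (n - 1) * (2 * n - 1) / 6) := by
  set c₁ := cmt x y with hc₁
  set c₂ := cmt c₁ x
  set c₃ := cmt c₂ x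
  set c₄ := cmt c₃ x
  set d := cmt c₂ c₁
  have hc₂₁ : c₂ * c₁ = c₁ * c₂ * d := by simp only [d, cmt]; group
  have inner (m : ℕ) : cmt c₁ (x ^ m) = c₂ ^ m * c₃ ^ m.choose 2 * c₄ ^ m.choose 3 :=
    cmt_pow_right_eq_pow_mul_pow_mul_pow (hc₄ x) (hc₄ c₃) (hc₄ c₂) hc₃₂ m
  induction n with
  | zero => simp [cmt]
  | succ m ih =>
    have step : cmt (x ^ (m + 1)) y =
        c₁ ^ 1 * c₂ ^ 0 * c₃ ^ 0 * c₄ ^ 0 * d ^ 0 *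
          (c₁ ^ 0 * c₂ ^ m * c₃ ^ m.choose 2 * c₄ ^ m.choose 3 * d ^ 0) *
          (c₁ ^ m * c₂ ^ m.choose 2 * c₃ ^ m.choose 3 * c₄ ^ m.choose 4 *
            d ^ (m * (m - 1) * (2 * m - 1) / 6)) := by
      rw [pow_succ', cmt_mul_left, ← hc₁, inner, ih]
      simp only [pow_zero, pow_one, mul_one, one_mul, mul_assoc]
    rw [step, collect_mul_collect hc₂₁ hc₃₁ hc₃₂ hc₄ hd, collect_mul_collect hc₂₁ hc₃₁ hc₃₂ hc₄ hd,
      sq_pyramidal_succ]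
    simp only [Nat.choose_succ_succ', Nat.choose_one_right, zero_add, add_zero, mul_zero, add_comm,
      Nat.reduceAdd]

end

theorem stmt_5_general {G : Type*} [Group G]
    (hG : (⊤ : Subgroup G).lowerCentralSeries 5 = ⊥) (x y : G) (n : ℕ) :
    cmt (x ^ n) y =
      (cmt x y) ^ n * (cmt (cmt x y) x) ^ n.choose 2 *
        (cmt (cmt (cmt x y) x) x) ^ n.choose 3 *
        (cmt (cmt (cmt (cmt x y) x) x) x) ^ n.choose 4 *
        (cmt (cmt (cmt x y) x) (cmt x y)) ^ (n * (n - 1) * (2 * n - 1) / 6) := by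
  have top_mem (g : G) : g ∈ (⊤ : Subgroup G).lowerCentralSeries 0 := Subgroup.mem_top g
  have mem₁ := cmt_mem_lowerCentralSeries (top_mem x) (top_mem y)
  have mem₂ := cmt_mem_lowerCentralSeries mem₁ (top_mem x)
  have mem₃ := cmt_mem_lowerCentralSeries mem₂ (top_mem x)
  exact cmt_pow_left_eq_of_commute
    (fun g => commute_of_mem_lowerCentralSeries hG le_rfl
      (cmt_mem_lowerCentralSeries mem₃ (top_mem x)) (top_mem g))
    (fun g => commute_of_mem_lowerCentralSeries hG le_rfl
      (cmt_mem_lowerCentralSeries mem₂ mem₁) (top_mem g))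
    (commute_of_mem_lowerCentralSeries hG le_rfl mem₃ mem₁)
    (commute_of_mem_lowerCentralSeries hG (by norm_num) mem₃ mem₂) n

theorem stmt_5 {G : Type*} [Group G]
    (hG : (⊤ : Subgroup G).lowerCentralSeries 5 = ⊥) (x y : G) (n : ℕ) (hn : 0 < n) :
    cmt (x ^ n) y =
      (cmt x y) ^ n * (cmt (cmt x y) x) ^ n.choose 2 *
        (cmt (cmt (cmt x y) x) x) ^ n.choose 3 *
        (cmt (cmt (cmt (cmt x y) x) x) x) ^ n.choose 4 *
        (cmt (cmt (cmt x y) x) (cmt x y)) ^ (n * (n - 1) * (2 * n - 1) / 6) :=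
  stmt_5_general hG x y n
end

section
/- Let S be an abelian group, let R and U be subgroups of S, and let T be a subgroup of R with T ≤ U. Let D be a divisible abelian group. Then a homomorphism h : R/T → D lies in the image of the natural map Hom(S/U, D) → Hom(R/T, D) (induced by inclusion R ↪ S and the quotient maps) if and only if h vanishes on (R ∩ U)/T. Consequently, the cokernel of this map is isomorphic to Hom((R ∩ U)/T, D). -/
/-!
A divisible group `D` is an injective `ℤ`-module (Baer), so a map `g : A → D` factors through
`φ : A → B` exactly when it kills `ker φ`: extend `g` from `φ(A) ≅ A ⧸ ker φ` to `B`. The kernel of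
`R/T → S/U` is the image of `(R ∩ U)/T`, which gives the criterion. Restriction along the injection
`(R ∩ U)/T → R/T` is onto `Hom((R ∩ U)/T, D)` by injectivity of `D`, and by the criterion its
kernel is the image of `Hom(S/U, D)`; hence the cokernel.
-/

open QuotientAddGroup

theorem Module.Baer.of_forall_exists_nsmul_eq {D : Type*} [AddCommGroup D]
    (hD : ∀ (d : D) (n : ℕ), 0 < n → ∃ e : D, n • e = d) : Module.Baer ℤ D :=
  letI := divisibleByOfSMulRightSurj D ℕ fun hn d => hD d _ (Nat.pos_of_ne_zero hn)
  letI := AddGroup.divisibleByIntOfDivisibleByNat D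
  Module.Baer.of_divisible D

namespace Module.Baer

variable {K A B D : Type*} [AddCommGroup K] [AddCommGroup A] [AddCommGroup B] [AddCommGroup D]

theorem exists_comp_eq_iff_ker_le (hD : Module.Baer ℤ D) (φ : A →+ B) (g : A →+ D) :
    (∃ f : B →+ D, f.comp φ = g) ↔ φ.ker ≤ g.ker := by
  constructor
  · rintro ⟨f, rfl⟩ a ha
    rw [AddMonoidHom.mem_ker] at ha ⊢
    rw [AddMonoidHom.comp_apply, ha, map_zero]
  · intro hle
    obtain ⟨f, hf⟩ := hD.extension_property_addMonoidHom φ.range.subtype Subtype.val_injective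
      ((lift φ.ker g hle).comp (quotientKerEquivRange φ).symm.toAddMonoidHom)
    refine ⟨f, AddMonoidHom.ext fun a => ?_⟩
    have hsymm : (quotientKerEquivRange φ).symm ⟨φ a, a, rfl⟩ = (a : A ⧸ φ.ker) :=
      (AddEquiv.symm_apply_eq _).mpr rfl
    simpa [hsymm] using DFunLike.congr_fun hf ⟨φ a, a, rfl⟩

theorem range_compHom'_eq_ker (hD : Module.Baer ℤ D) {j : K →+ A} {φ : A →+ B}
    (hjφ : j.range = φ.ker) :
    (AddMonoidHom.compHom' φ : (B →+ D) →+ A →+ D).range = (AddMonoidHom.compHom' j).ker := by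
  ext g
  change (∃ f : B →+ D, f.comp φ = g) ↔ g.comp j = 0
  rw [hD.exists_comp_eq_iff_ker_le, ← hjφ, AddMonoidHom.range_le_ker_iff]

noncomputable def quotientRangeCompHomEquiv (hD : Module.Baer ℤ D) {j : K →+ A} {φ : A →+ B}
    (hj : Function.Injective j) (hjφ : j.range = φ.ker) :
    (A →+ D) ⧸ (AddMonoidHom.compHom' φ : (B →+ D) →+ A →+ D).range ≃+ (K →+ D) :=
  (quotientAddEquivOfEq (hD.range_compHom'_eq_ker hjφ)).trans
    (quotientKerEquivOfSurjective _ fun g => hD.extension_property_addMonoidHom j hj g)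

end Module.Baer

namespace QuotientAddGroup

variable {S : Type*} [AddCommGroup S] {R U T : AddSubgroup S}

theorem mk_mem_ker_map_subtype_iff (hTU : T ≤ U) (r : R) :
    (r : R ⧸ T.addSubgroupOf R) ∈ (map (T.addSubgroupOf R) U R.subtype fun _ ht => hTU ht).ker ↔
      (r : S) ∈ U :=
  eq_zero_iff (r : S)

theorem map_inclusion_inf_injective :
    Function.Injective (map (T.addSubgroupOf (R ⊓ U)) (T.addSubgroupOf R)
      (AddSubgroup.inclusion inf_le_left) fun _ ht => ht) := by
  refine (injective_iff_map_eq_zero _).mpr fun a ha => ?_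
  induction a using QuotientAddGroup.induction_on with
  | H x => exact (eq_zero_iff x).mpr ((eq_zero_iff (AddSubgroup.inclusion inf_le_left x)).mp ha)

theorem range_map_inclusion_inf_eq_ker_map_subtype (hTU : T ≤ U) :
    (map (T.addSubgroupOf (R ⊓ U)) (T.addSubgroupOf R)
      (AddSubgroup.inclusion inf_le_left) fun _ ht => ht).range =
      (map (T.addSubgroupOf R) U R.subtype fun _ ht => hTU ht).ker := by
  refine le_antisymm ((AddMonoidHom.range_le_ker_iff _ _).mpr ?_) fun a ha => ?_
  · ext x
    exact (eq_zero_iff _).mpr x.2.2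
  · induction a using QuotientAddGroup.induction_on with
    | H r => exact ⟨(⟨r, r.2, (mk_mem_ker_map_subtype_iff hTU r).mp ha⟩ : ↥(R ⊓ U)), rfl⟩

end QuotientAddGroup

theorem stmt_10_general {S : Type*} [AddCommGroup S] (R U T : AddSubgroup S)
    (hTU : T ≤ U)
    (D : Type*) [AddCommGroup D]
    (hD : ∀ (d : D) (n : ℕ), 0 < n → ∃ e : D, n • e = d)
    (h : R ⧸ T.addSubgroupOf R →+ D) :
    ((∃ f : S ⧸ U →+ D, ∀ r : R,
        h (QuotientAddGroup.mk r) = f (QuotientAddGroup.mk (r : S))) ↔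
      ∀ r : R, (r : S) ∈ U → h (QuotientAddGroup.mk r) = 0) ∧
    Nonempty
      (((R ⧸ T.addSubgroupOf R →+ D) ⧸
          (AddMonoidHom.range
            { toFun := fun f : S ⧸ U →+ D =>
                f.comp (QuotientAddGroup.map (T.addSubgroupOf R) U R.subtype
                  (fun t ht => hTU ht))
              map_zero' := rfl
              map_add' := fun f g => rfl })) ≃+
        ((R ⊓ U : AddSubgroup S) ⧸ T.addSubgroupOf (R ⊓ U) →+ D)) := by
  have hBaer := Module.Baer.of_forall_exists_nsmul_eq hD
  refine ⟨?_, ⟨hBaer.quotientRangeCompHomEquiv map_inclusion_inf_injective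
    (range_map_inclusion_inf_eq_ker_map_subtype hTU)⟩⟩
  calc (∃ f : S ⧸ U →+ D, ∀ r : R, h r = f (r : S))
      ↔ ∃ f : S ⧸ U →+ D, f.comp (map _ U R.subtype fun _ ht => hTU ht) = h :=
        exists_congr fun f => by
          rw [AddMonoidHom.ext_iff, mk_surjective.forall]
          exact forall_congr' fun r => eq_comm
    _ ↔ _ := hBaer.exists_comp_eq_iff_ker_le _ h
    _ ↔ ∀ r : R, (r : S) ∈ U → h r = 0 := by
        rw [SetLike.le_def, mk_surjective.forall]
        simp only [mk_mem_ker_map_subtype_iff hTU, AddMonoidHom.mem_ker]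

theorem stmt_10 {S : Type*} [AddCommGroup S] (R U T : AddSubgroup S)
    (hTR : T ≤ R) (hTU : T ≤ U)
    (D : Type*) [AddCommGroup D]
    (hD : ∀ (d : D) (n : ℕ), 0 < n → ∃ e : D, n • e = d)
    (h : R ⧸ T.addSubgroupOf R →+ D) :
    ((∃ f : S ⧸ U →+ D, ∀ r : R,
        h (QuotientAddGroup.mk r) = f (QuotientAddGroup.mk (r : S))) ↔
      ∀ r : R, (r : S) ∈ U → h (QuotientAddGroup.mk r) = 0) ∧
    Nonempty
      (((R ⧸ T.addSubgroupOf R →+ D) ⧸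
          (AddMonoidHom.range
            { toFun := fun f : S ⧸ U →+ D =>
                f.comp (QuotientAddGroup.map (T.addSubgroupOf R) U R.subtype
                  (fun t ht => hTU ht))
              map_zero' := rfl
              map_add' := fun f g => rfl })) ≃+
        ((R ⊓ U : AddSubgroup S) ⧸ T.addSubgroupOf (R ⊓ U) →+ D)) :=
  stmt_10_general R U T hTU D hD h
end

section
/- Let G be a group, N a normal subgroup, and χ : N → ℚ/ℤ a homomorphism that vanishes on every commutator [x,y] of G that lies in N. Fix a set-theoretic section μ : G/N → G of the quotient map, and define α(x̄, ȳ) = χ(μ(x̄)μ(ȳ)μ(x̄ȳ)⁻¹) for x̄, ȳ ∈ G/N. Then for any subgroup A of G containing N such that A/N is abelian, α is symmetric on A/N, i.e., α(ā, b̄) = α(b̄, ā) for all ā, b̄ ∈ A/N. -/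
/-!
If `p` and `q` commute in `G ⧸ N`, then `μ p * μ q * (μ (p * q))⁻¹` and
`μ q * μ p * (μ (p * q))⁻¹` both lie in `N`, and their quotient is the commutator
`μ p * μ q * (μ p)⁻¹ * (μ q)⁻¹`, which therefore lies in `N` and is killed by `χ`.
-/

/-- `ℚ/ℤ` as an additive group. -/
abbrev QmodZ : Type := AddCircle (1 : ℚ)

theorem QuotientGroup.commute_mk_iff {G : Type*} [Group G] {N : Subgroup G} [N.Normal]
    {x y : G} : Commute (x : G ⧸ N) (y : G ⧸ N) ↔ x⁻¹ * y⁻¹ * x * y ∈ N := by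
  rw [Commute, SemiconjBy, ← QuotientGroup.mk_mul, ← QuotientGroup.mk_mul, eq_comm,
    QuotientGroup.eq]
  simp only [mul_inv_rev, mul_assoc]

theorem QuotientGroup.section_mul_mul_inv_mem {G : Type*} [Group G] {N : Subgroup G} [N.Normal]
    {μ : G ⧸ N → G} (hμ : ∀ q : G ⧸ N, (μ q : G ⧸ N) = q) (p q : G ⧸ N) :
    μ p * μ q * (μ (p * q))⁻¹ ∈ N := by
  rw [← QuotientGroup.eq_one_iff, QuotientGroup.mk_mul, QuotientGroup.mk_mul,
    QuotientGroup.mk_inv, hμ, hμ, hμ, mul_inv_cancel]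

theorem MonoidHom.apply_mul_mul_inv_comm {G M : Type*} [Group G] [Group M]
    {N : Subgroup G} (χ : N →* M)
    (hχ : ∀ x y : G, ∀ h : x⁻¹ * y⁻¹ * x * y ∈ N, χ ⟨x⁻¹ * y⁻¹ * x * y, h⟩ = 1)
    {x y z : G} (h₁ : x * y * z⁻¹ ∈ N) (h₂ : y * x * z⁻¹ ∈ N) :
    χ ⟨x * y * z⁻¹, h₁⟩ = χ ⟨y * x * z⁻¹, h₂⟩ := by
  have hc : x⁻¹⁻¹ * y⁻¹⁻¹ * x⁻¹ * y⁻¹ ∈ N := by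
    convert N.mul_mem h₁ (N.inv_mem h₂) using 1
    group
  have hsplit : (⟨x * y * z⁻¹, h₁⟩ : N) = ⟨_, hc⟩ * ⟨y * x * z⁻¹, h₂⟩ := by
    ext
    simp only [Subgroup.coe_mul]
    group
  rw [hsplit, map_mul, hχ, one_mul]

theorem cocycle_symm_of_commute {G M : Type*} [Group G] [Group M] {N : Subgroup G} [N.Normal]
    (χ : N →* M)
    (hχ : ∀ x y : G, ∀ h : x⁻¹ * y⁻¹ * x * y ∈ N, χ ⟨x⁻¹ * y⁻¹ * x * y, h⟩ = 1)
    {μ : G ⧸ N → G} (hμ : ∀ q : G ⧸ N, (μ q : G ⧸ N) = q) {α : G ⧸ N → G ⧸ N → M}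
    (hα : ∀ (q₁ q₂ : G ⧸ N) (h : μ q₁ * μ q₂ * (μ (q₁ * q₂))⁻¹ ∈ N),
      α q₁ q₂ = χ ⟨μ q₁ * μ q₂ * (μ (q₁ * q₂))⁻¹, h⟩)
    {p q : G ⧸ N} (hpq : Commute p q) : α p q = α q p := by
  have h₁ := QuotientGroup.section_mul_mul_inv_mem hμ p q
  have h₂ := QuotientGroup.section_mul_mul_inv_mem hμ q p
  rw [hα p q h₁, hα q p h₂]
  rw [← hpq.eq] at h₂
  convert χ.apply_mul_mul_inv_comm hχ h₁ h₂ using 4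
  rw [hpq.eq]

theorem stmt_12_general {G : Type*} [Group G] (N : Subgroup G) [N.Normal]
    (χ : N →* Multiplicative QmodZ)
    (hχ : ∀ x y : G, ∀ h : x⁻¹ * y⁻¹ * x * y ∈ N, χ ⟨x⁻¹ * y⁻¹ * x * y, h⟩ = 1)
    (μ : G ⧸ N → G) (hμ : ∀ q : G ⧸ N, (μ q : G ⧸ N) = q)
    (α : G ⧸ N → G ⧸ N → Multiplicative QmodZ)
    (hα : ∀ (q₁ q₂ : G ⧸ N) (h : μ q₁ * μ q₂ * (μ (q₁ * q₂))⁻¹ ∈ N),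
      α q₁ q₂ = χ ⟨μ q₁ * μ q₂ * (μ (q₁ * q₂))⁻¹, h⟩)
    (A : Subgroup G)
    (hab : ∀ a b : G, a ∈ A → b ∈ A → a⁻¹ * b⁻¹ * a * b ∈ N) :
    ∀ a b : G, a ∈ A → b ∈ A → α (a : G ⧸ N) (b : G ⧸ N) = α (b : G ⧸ N) (a : G ⧸ N) :=
  fun a b ha hb =>
    cocycle_symm_of_commute χ hχ hμ hα (QuotientGroup.commute_mk_iff.2 (hab a b ha hb))

theorem stmt_12 {G : Type*} [Group G] (N : Subgroup G) [N.Normal]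
    (χ : N →* Multiplicative QmodZ)
    (hχ : ∀ x y : G, ∀ h : x⁻¹ * y⁻¹ * x * y ∈ N, χ ⟨x⁻¹ * y⁻¹ * x * y, h⟩ = 1)
    (μ : G ⧸ N → G) (hμ : ∀ q : G ⧸ N, (μ q : G ⧸ N) = q)
    (α : G ⧸ N → G ⧸ N → Multiplicative QmodZ)
    (hα : ∀ (q₁ q₂ : G ⧸ N) (h : μ q₁ * μ q₂ * (μ (q₁ * q₂))⁻¹ ∈ N),
      α q₁ q₂ = χ ⟨μ q₁ * μ q₂ * (μ (q₁ * q₂))⁻¹, h⟩)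
    (A : Subgroup G) (hNA : N ≤ A)
    (hab : ∀ a b : G, a ∈ A → b ∈ A → a⁻¹ * b⁻¹ * a * b ∈ N) :
    ∀ a b : G, a ∈ A → b ∈ A → α (a : G ⧸ N) (b : G ⧸ N) = α (b : G ⧸ N) (a : G ⧸ N) :=
  stmt_12_general N χ hχ μ hμ α hα A hab
end

section
/- Let H and N be groups, H₁ a subgroup of the center of H, N₁ a subgroup of the center of N, and ξ : H₁ → N₁ an isomorphism satisfying ξ(H₁ ∩ [H,H]) ⊆ N₁ ∩ K(N), where K(N) is the set of commutators of N. Let Z = {(a, ξ(a)⁻¹) : a ∈ H₁} ≤ H × N. Then Z ∩ ([H,H] × [N,N]) equals the subgroup generated by Z ∩ (K(H) × K(N)) if and only if H₁ ∩ [H,H] equals the subgroup generated by H₁ ∩ K(H). -/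
/-!
Every element of `Z` is determined by its first coordinate, so `Prod.fst` maps the subgroups of
`H × N` contained in `Z` injectively to subgroups of `H`. It sends `Z ⊓ ([H,H] × [N,N])` to
`H₁ ⊓ [H,H]` and `Z ∩ (K(H) × K(N))` to `H₁ ∩ K(H)`: the second coordinate `ξ(a)⁻¹` lies in
`K(N) ⊆ [N,N]` as soon as `a ∈ [H,H]`, because `K(N)` is closed under inversion.
-/

/-- `Kset G` is the set of commutators `[x,y] = x⁻¹y⁻¹xy` of `G`. -/
def Kset (G : Type*) [Group G] : Set G := {g | ∃ x y : G, g = x⁻¹ * y⁻¹ * x * y}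

lemma Kset_inv {G : Type*} [Group G] {g : G} (h : g ∈ Kset G) : g⁻¹ ∈ Kset G := by
  obtain ⟨x, y, rfl⟩ := h
  exact ⟨y, x, by group⟩

lemma Kset_subset_commutator (G : Type*) [Group G] : Kset G ⊆ commutator G := by
  rintro _ ⟨x, y, rfl⟩
  rw [SetLike.mem_coe, commutator_def]
  simpa [commutatorElement_def] using
    Subgroup.commutator_mem_commutator (Subgroup.mem_top x⁻¹) (Subgroup.mem_top y⁻¹)

section InjOn

variable {G G' : Type*} [Group G] [Group G'] {f : G →* G'} {Z K L : Subgroup G}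

lemma Subgroup.map_le_map_iff_of_injOn (hf : Set.InjOn f Z) (hK : K ≤ Z) (hL : L ≤ Z) :
    K.map f ≤ L.map f ↔ K ≤ L := by
  refine ⟨fun hKL x hx => ?_, Subgroup.map_mono⟩
  obtain ⟨y, hy, hyx⟩ := hKL ⟨x, hx, rfl⟩
  rwa [← hf (hL hy) (hK hx) hyx]

lemma Subgroup.map_eq_map_iff_of_injOn (hf : Set.InjOn f Z) (hK : K ≤ Z) (hL : L ≤ Z) :
    K.map f = L.map f ↔ K = L := by
  simp only [le_antisymm_iff, Subgroup.map_le_map_iff_of_injOn hf hK hL,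
    Subgroup.map_le_map_iff_of_injOn hf hL hK]

end InjOn

section Graph

variable {α β : Type*} {S : Set α} {f : S → β} {Z : Set (α × β)}

lemma Set.injOn_fst_of_graph (hZ : ∀ p, p ∈ Z ↔ ∃ a : S, p = ((a : α), f a)) :
    Set.InjOn Prod.fst Z := by
  intro p hp q hq hpq
  obtain ⟨a, rfl⟩ := (hZ p).mp hp
  obtain ⟨b, rfl⟩ := (hZ q).mp hq
  obtain rfl : a = b := Subtype.ext hpq
  rfl

lemma Set.image_fst_inter_prod_of_graph (hZ : ∀ p, p ∈ Z ↔ ∃ a : S, p = ((a : α), f a))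
    {A : Set α} {B : Set β} (hf : ∀ a : S, (a : α) ∈ A → f a ∈ B) :
    Prod.fst '' (Z ∩ A ×ˢ B) = S ∩ A := by
  ext x
  constructor
  · rintro ⟨p, ⟨hpZ, hpA, -⟩, rfl⟩
    obtain ⟨a, rfl⟩ := (hZ p).mp hpZ
    exact ⟨a.2, hpA⟩
  · rintro ⟨hxS, hxA⟩
    exact ⟨(x, f ⟨x, hxS⟩), ⟨(hZ _).mpr ⟨⟨x, hxS⟩, rfl⟩, hxA, hf ⟨x, hxS⟩ hxA⟩, rfl⟩

end Graph

theorem stmt_13_general {H N : Type*} [Group H] [Group N]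
    (H₁ : Subgroup H) (N₁ : Subgroup N)
    (ξ : H₁ ≃* N₁)
    (hξ : ∀ a : H₁, (a : H) ∈ commutator H → ((ξ a : N₁) : N) ∈ Kset N)
    (Z : Subgroup (H × N))
    (hZ : ∀ p : H × N, p ∈ Z ↔ ∃ a : H₁, p = ((a : H), ((ξ a : N₁) : N)⁻¹)) :
    Z ⊓ (commutator H).prod (commutator N) =
        Subgroup.closure ((Z : Set (H × N)) ∩ (Kset H ×ˢ Kset N)) ↔
      H₁ ⊓ commutator H = Subgroup.closure ((H₁ : Set H) ∩ Kset H) := by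
  have hK : ∀ a : H₁, (a : H) ∈ Kset H → ((ξ a : N₁) : N)⁻¹ ∈ Kset N :=
    fun a ha => Kset_inv (hξ a (Kset_subset_commutator H ha))
  have hcomm : ∀ a : H₁, (a : H) ∈ commutator H → ((ξ a : N₁) : N)⁻¹ ∈ commutator N :=
    fun a ha => (commutator N).inv_mem (Kset_subset_commutator N (hξ a ha))
  have hinf : (Z ⊓ (commutator H).prod (commutator N)).map (MonoidHom.fst H N) =
      H₁ ⊓ commutator H :=
    SetLike.coe_injective (Set.image_fst_inter_prod_of_graph hZ hcomm)
  have hclosure : (Subgroup.closure ((Z : Set (H × N)) ∩ (Kset H ×ˢ Kset N))).map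
      (MonoidHom.fst H N) = Subgroup.closure ((H₁ : Set H) ∩ Kset H) := by
    rw [MonoidHom.map_closure]
    exact congrArg Subgroup.closure (Set.image_fst_inter_prod_of_graph hZ hK)
  rw [← hinf, ← hclosure, Subgroup.map_eq_map_iff_of_injOn (Set.injOn_fst_of_graph hZ)
    inf_le_left (Subgroup.closure_le _ |>.mpr Set.inter_subset_left)]

theorem stmt_13 {H N : Type*} [Group H] [Group N]
    (H₁ : Subgroup H) (N₁ : Subgroup N)
    (hH₁ : H₁ ≤ Subgroup.center H) (hN₁ : N₁ ≤ Subgroup.center N)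
    (ξ : H₁ ≃* N₁)
    (hξ : ∀ a : H₁, (a : H) ∈ commutator H → ((ξ a : N₁) : N) ∈ Kset N)
    (Z : Subgroup (H × N))
    (hZ : ∀ p : H × N, p ∈ Z ↔ ∃ a : H₁, p = ((a : H), ((ξ a : N₁) : N)⁻¹)) :
    Z ⊓ (commutator H).prod (commutator N) =
        Subgroup.closure ((Z : Set (H × N)) ∩ (Kset H ×ˢ Kset N)) ↔
      H₁ ⊓ commutator H = Subgroup.closure ((H₁ : Set H) ∩ Kset H) :=
  stmt_13_general H₁ N₁ ξ hξ Z hZ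
end
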